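/- Let γ be a probability measure and H ≤ b̄ a bounded measurable function with mean Ĥ = ∫H dγ < b̄ and variance s² = Var_γ(H) > 0. Then for every c > 0, the risk-sensitive performance measure Λ_γ(c, H) := (1/c) log ∫ e^{c(H−Ĥ)} dγ satisfies Λ_γ(c, H) ≤ (1/c) log( ((b̄−Ĥ)²/((b̄−Ĥ)²+s²)) e^{−c s²/(b̄−Ĥ)} + (s²/((b̄−Ĥ)²+s²)) e^{c(b̄−Ĥ)} ). -/

import Mathlib

/-!
Write `X = H - Ĥ`, `B = b̄ - Ĥ` and `a = s² / B`. The quantity inside the logarithm on the right is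
`𝔼 exp (c Y)` for the two-point law `Y ∈ {-a, B}` with mean `0` and variance `s²`. With
`L = c (B + a)` and `K = (exp L - 1 - L) / (B + a) ^ 2`, the quadratic
`q x = exp (-c a) * (1 + c (x + a) + K (x + a) ^ 2)` majorizes `exp (c x)` on `x ≤ B`, because
`(exp u - 1 - u) / u ^ 2` is nondecreasing, and agrees with it at `-a` and `B`. As `X` and `Y` have
the same first two moments, `𝔼 exp (c X) ≤ 𝔼 q X = 𝔼 q Y = 𝔼 exp (c Y)`.
-/

open MeasureTheory

namespace Real

lemma hasSum_exp_sub_one_sub (x : ℝ) :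
    HasSum (fun n : ℕ => x ^ (n + 2) / (n + 2).factorial) (exp x - 1 - x) := by
  have h := (hasSum_nat_add_iff' 2).mpr (NormedSpace.expSeries_div_hasSum_exp x)
  rw [← exp_eq_exp_ℝ] at h
  simpa [Finset.sum_range_succ, sub_sub] using h

lemma exp_sub_one_sub_mul_sq_le {u L : ℝ} (hu : 0 ≤ u) (huL : u ≤ L) :
    (exp u - 1 - u) * L ^ 2 ≤ (exp L - 1 - L) * u ^ 2 := by
  refine hasSum_le (fun n => ?_) ((hasSum_exp_sub_one_sub u).mul_right _)
    ((hasSum_exp_sub_one_sub L).mul_right _)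
  calc u ^ (n + 2) / (n + 2).factorial * L ^ 2
      = u ^ n * (u ^ 2 * L ^ 2) / (n + 2).factorial := by ring
    _ ≤ L ^ n * (u ^ 2 * L ^ 2) / (n + 2).factorial := by gcongr
    _ = L ^ (n + 2) / (n + 2).factorial * u ^ 2 := by ring

lemma exp_le_one_add_add_sq_div_two_of_nonpos {x : ℝ} (hx : x ≤ 0) :
    exp x ≤ 1 + x + x ^ 2 / 2 := by
  have h := quadratic_le_exp_of_nonneg (neg_nonneg.mpr hx)
  have hmul : exp x * exp (-x) = 1 := by rw [← exp_add, add_neg_cancel, exp_zero]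
  nlinarith [exp_pos x, sq_nonneg x, sq_nonneg (x * x)]

lemma exp_le_one_add_add_sq_mul {u L : ℝ} (hL : 0 < L) (huL : u ≤ L) :
    exp u ≤ 1 + u + u ^ 2 * ((exp L - 1 - L) / L ^ 2) := by
  rcases le_or_gt u 0 with hu | hu
  · have hhalf : 1 / 2 ≤ (exp L - 1 - L) / L ^ 2 := by
      rw [le_div_iff₀ (by positivity)]
      linarith [quadratic_le_exp_of_nonneg hL.le]
    calc exp u ≤ 1 + u + u ^ 2 * (1 / 2) := by
          linarith [exp_le_one_add_add_sq_div_two_of_nonpos hu]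
      _ ≤ _ := by gcongr
  · have h := exp_sub_one_sub_mul_sq_le hu.le huL
    have h' : exp u - 1 - u ≤ (exp L - 1 - L) * u ^ 2 / L ^ 2 := by
      rwa [le_div_iff₀ (by positivity)]
    linarith [show u ^ 2 * ((exp L - 1 - L) / L ^ 2) = (exp L - 1 - L) * u ^ 2 / L ^ 2 by ring]

end Real

section Bennett

variable {Ω : Type*} [MeasurableSpace Ω] {μ : Measure Ω} [IsProbabilityMeasure μ]

lemma integral_add_mul_add_mul_sq {Y : Ω → ℝ} (hY : Integrable Y μ)
    (hY2 : Integrable (fun ω => Y ω ^ 2) μ) (p q r : ℝ) :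
    ∫ ω, (p + q * Y ω + r * Y ω ^ 2) ∂μ = p + q * ∫ ω, Y ω ∂μ + r * ∫ ω, Y ω ^ 2 ∂μ := by
  have hpqY : Integrable (fun ω => p + q * Y ω) μ := (integrable_const p).add (hY.const_mul q)
  rw [integral_add hpqY (hY2.const_mul r),
    integral_add (integrable_const p) (hY.const_mul q), integral_const_mul, integral_const_mul,
    integral_const, probReal_univ, one_smul]

lemma integral_add_const_sq {X : Ω → ℝ} (hX : Integrable X μ)
    (hX2 : Integrable (fun ω => X ω ^ 2) μ) (a : ℝ) :
    ∫ ω, (X ω + a) ^ 2 ∂μ = a ^ 2 + 2 * a * ∫ ω, X ω ∂μ + ∫ ω, X ω ^ 2 ∂μ := by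
  calc ∫ ω, (X ω + a) ^ 2 ∂μ = ∫ ω, (a ^ 2 + 2 * a * X ω + 1 * X ω ^ 2) ∂μ :=
        integral_congr_ae (ae_of_all _ fun ω => by ring)
    _ = _ := by rw [integral_add_mul_add_mul_sq hX hX2, one_mul]

theorem integral_exp_mul_le_bennett {X : Ω → ℝ} {B σ2 c : ℝ} (hX : Integrable X μ)
    (hX2 : Integrable (fun ω => X ω ^ 2) μ) (hXB : ∀ᵐ ω ∂μ, X ω ≤ B)
    (hmean : ∫ ω, X ω ∂μ = 0) (hvar : ∫ ω, X ω ^ 2 ∂μ = σ2) (hB : 0 < B) (hc : 0 < c) :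
    ∫ ω, Real.exp (c * X ω) ∂μ ≤
      B ^ 2 / (B ^ 2 + σ2) * Real.exp (-c * σ2 / B) + σ2 / (B ^ 2 + σ2) * Real.exp (c * B) := by
  have hσ2 : 0 ≤ σ2 := hvar ▸ integral_nonneg fun ω => sq_nonneg (X ω)
  set a := σ2 / B with ha_def
  have ha : 0 ≤ a := div_nonneg hσ2 hB.le
  set L := c * (B + a) with hL_def
  have hL : 0 < L := by positivity
  set K := (Real.exp L - 1 - L) / (B + a) ^ 2 with hK_def
  have hmajor : ∀ x ≤ B,
      Real.exp (c * x) ≤ Real.exp (-(c * a)) * (1 + c * (x + a) + K * (x + a) ^ 2) := by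
    intro x hx
    have hquad := Real.exp_le_one_add_add_sq_mul hL (u := c * (x + a)) (by rw [hL_def]; gcongr)
    have hK : (c * (x + a)) ^ 2 * ((Real.exp L - 1 - L) / L ^ 2) = K * (x + a) ^ 2 := by
      rw [hK_def, hL_def]; field_simp
    calc Real.exp (c * x) = Real.exp (-(c * a)) * Real.exp (c * (x + a)) := by
          rw [← Real.exp_add]; ring_nf
      _ ≤ _ := by rw [← hK]; gcongr
  have hXa : Integrable (fun ω => X ω + a) μ := hX.add (integrable_const a)
  have hXa2 : Integrable (fun ω => (X ω + a) ^ 2) μ := by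
    refine ((hX2.add (hX.const_mul (2 * a))).add (integrable_const (a ^ 2))).congr
      (ae_of_all _ fun ω => ?_)
    simp only [Pi.add_apply]
    ring
  calc ∫ ω, Real.exp (c * X ω) ∂μ
      ≤ ∫ ω, Real.exp (-(c * a)) * (1 + c * (X ω + a) + K * (X ω + a) ^ 2) ∂μ :=
        integral_mono_of_nonneg (ae_of_all _ fun ω => (Real.exp_pos _).le)
          (((integrable_const 1).add (hXa.const_mul c)).add (hXa2.const_mul K) |>.const_mul _)
          (hXB.mono fun ω => hmajor (X ω))
    _ = Real.exp (-(c * a)) * (1 + c * a + K * (a ^ 2 + σ2)) := by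
        rw [integral_const_mul, integral_add_mul_add_mul_sq hXa hXa2, integral_add_const_sq hX hX2,
          integral_add hX (integrable_const a), hmean, hvar, integral_const, probReal_univ]
        simp
    _ = _ := by
        have hσ2a : σ2 = a * B := (div_mul_cancel₀ _ hB.ne').symm
        have hexpL : Real.exp L = Real.exp (c * B) * Real.exp (c * a) := by
          rw [← Real.exp_add, hL_def, mul_add]
        have hexpa : Real.exp (-c * σ2 / B) = Real.exp (-(c * a)) := by
          rw [ha_def]; ring_nf
        rw [hexpa, hK_def, hexpL, hσ2a, Real.exp_neg]
        have : B + a ≠ 0 := by positivity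
        field_simp
        ring

end Bennett

lemma integrable_exp_mul_of_ae_le {Ω : Type*} [MeasurableSpace Ω] {μ : Measure Ω}
    [IsFiniteMeasure μ] {X : Ω → ℝ} {B c : ℝ} (hX : AEStronglyMeasurable X μ)
    (hXB : ∀ᵐ ω ∂μ, X ω ≤ B) (hc : 0 ≤ c) :
    Integrable (fun ω => Real.exp (c * X ω)) μ :=
  .of_bound (Real.continuous_exp.comp_aestronglyMeasurable (hX.const_mul c)) (Real.exp (c * B))
    (hXB.mono fun ω hω => by
      rw [Real.norm_of_nonneg (Real.exp_pos _).le]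
      gcongr)

theorem concentration_risk_sensitive_general {Ω : Type*} [MeasurableSpace Ω]
    (gam : Measure Ω) [IsProbabilityMeasure gam]
    (H : Ω → ℝ) (hInt : Integrable H gam)
    (bbar : ℝ) (hb : ∀ᵐ x ∂gam, H x ≤ bbar)
    (Hhat : ℝ) (hHhat : ∫ x, H x ∂gam = Hhat) (hlt : Hhat < bbar)
    (s2 : ℝ) (hs2 : ∫ x, (H x - Hhat) ^ 2 ∂gam = s2) (hs2pos : 0 < s2)
    (c : ℝ) (hc : 0 < c) :
    (1 / c) * Real.log (∫ x, Real.exp (c * (H x - Hhat)) ∂gam) ≤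
      (1 / c) * Real.log
        ((bbar - Hhat) ^ 2 / ((bbar - Hhat) ^ 2 + s2) * Real.exp (-c * s2 / (bbar - Hhat))
          + s2 / ((bbar - Hhat) ^ 2 + s2) * Real.exp (c * (bbar - Hhat))) := by
  have hX : Integrable (fun x => H x - Hhat) gam := hInt.sub (integrable_const Hhat)
  -- a non-integrable square would have integral `0`, contradicting `0 < s2`
  have hX2 : Integrable (fun x => (H x - Hhat) ^ 2) gam := by
    by_contra h
    rw [integral_undef h] at hs2
    exact hs2pos.ne hs2
  have hmean : ∫ x, (H x - Hhat) ∂gam = 0 := by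
    rw [integral_sub hInt (integrable_const Hhat), hHhat, integral_const, probReal_univ, one_smul,
      sub_self]
  have hXB : ∀ᵐ x ∂gam, H x - Hhat ≤ bbar - Hhat := hb.mono fun x hx => sub_le_sub_right hx Hhat
  have hmgf := integral_exp_mul_le_bennett hX hX2 hXB hmean hs2 (sub_pos.mpr hlt) hc
  have hpos := integral_exp_pos (integrable_exp_mul_of_ae_le hX.aestronglyMeasurable hXB hc.le)
  exact mul_le_mul_of_nonneg_left (Real.log_le_log hpos hmgf) (by positivity)

/-- Concentration bound for the risk-sensitive performance measure. -/
theorem concentration_risk_sensitive {Ω : Type*} [MeasurableSpace Ω]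
    (gam : Measure Ω) [IsProbabilityMeasure gam]
    (H : Ω → ℝ) (hH : Measurable H) (hInt : Integrable H gam)
    (bbar : ℝ) (hb : ∀ᵐ x ∂gam, H x ≤ bbar)
    (Hhat : ℝ) (hHhat : ∫ x, H x ∂gam = Hhat) (hlt : Hhat < bbar)
    (s2 : ℝ) (hs2 : ∫ x, (H x - Hhat) ^ 2 ∂gam = s2) (hs2pos : 0 < s2)
    (c : ℝ) (hc : 0 < c) :
    (1 / c) * Real.log (∫ x, Real.exp (c * (H x - Hhat)) ∂gam) ≤
      (1 / c) * Real.log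
        ((bbar - Hhat) ^ 2 / ((bbar - Hhat) ^ 2 + s2) * Real.exp (-c * s2 / (bbar - Hhat))
          + s2 / ((bbar - Hhat) ^ 2 + s2) * Real.exp (c * (bbar - Hhat))) :=
  concentration_risk_sensitive_general gam H hInt bbar hb Hhat hHhat hlt s2 hs2 hs2pos c hc
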